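/- arXiv:1806.02625 — 2 statements merged into one kernel-verified Lean document; each statement's English description precedes it below -/
import Mathlib

section
/- Let r, s, t be positive integers. The adjacency characteristic polynomial of the multicone graph K_r ∇ sK_t equals (x + 1)^(r − 1 + s(t − 1)) · (x − (t − 1))^(s − 1) · (x² − a x + b), where a = r + t − 2 and b = (r − 1)(t − 1) − r s t. Equivalently, the adjacency spectrum of K_r ∇ sK_t consists of −1 with multiplicity r − 1 + s(t − 1), t − 1 with multiplicity s − 1, and the two roots (a ± √(a² − 4b))/2, each with multiplicity 1. -/
open SimpleGraph Polynomial

/-- The multicone graph `K_r ∇ sK_t`: the join of the complete graph on `r` vertices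
with `s` disjoint copies of the complete graph on `t` vertices. -/
def multicone (r s t : ℕ) : SimpleGraph (Fin r ⊕ Fin s × Fin t) where
  Adj v w := v ≠ w ∧ ∀ i a j b, v = Sum.inr (i, a) → w = Sum.inr (j, b) → i = j
  symm := ⟨by
    rintro v w ⟨hne, h⟩
    exact ⟨hne.symm, fun i a j b hv hw => (h j b i a hw hv).symm⟩⟩
  loopless := ⟨fun v h => h.1 rfl⟩

noncomputable instance (r s t : ℕ) : DecidableRel (multicone r s t).Adj :=
  Classical.decRel _

noncomputable instance (r s t : ℕ) : DecidableRel ((multicone r s t)ᶜ).Adj :=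
  Classical.decRel _

/-!
Order the vertices as `R ⊕ (T₁ ∪ ⋯ ∪ Tₛ)` and write `J` for an all-ones matrix. Then `x • 1 - A`
has diagonal blocks `(x + 1) • 1 - J` on `R` and `1 ⊗ₖ ((x + 1) • 1 - J)` on the `Tᵢ`, and
off-diagonal blocks `-J`. For `x ∉ {-1, t - 1}` the lower right block is invertible with constant
row sums `x + 1 - t`, so its Schur complement is `(x + 1) • 1 - (1 + st / (x + 1 - t)) • J`. All
determinants involved are of the form `det (a • 1 - b • J)`, which the characteristic polynomial
of the rank-one matrix `b • J` gives, and two polynomials agreeing at infinitely many points are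
equal.
-/

open Matrix
open scoped Kronecker

namespace Matrix

variable {m n : Type*} [Fintype n] [DecidableEq n]

theorem det_scalar_sub_of_const [Nonempty n] {R : Type*} [CommRing R] (a b : R) :
    (scalar n a - of fun _ _ => b).det =
      a ^ (Fintype.card n - 1) * (a - Fintype.card n * b) := by
  have hconst : (of fun _ _ => b : Matrix n n R) = vecMulVec (fun _ => b) 1 := by
    ext; simp [vecMulVec_apply]
  obtain ⟨k, hk⟩ := Nat.exists_eq_add_one.mpr (Fintype.card_pos (α := n))
  rw [hconst, ← eval_charpoly, charpoly_vecMulVec]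
  simp [dotProduct, hk, pow_succ]
  ring

theorem one_kronecker_scalar_sub_of_one_mulVec_one [Fintype m] [DecidableEq m] {R : Type*}
    [CommRing R] (a : R) :
    ((1 : Matrix m m R) ⊗ₖ (scalar n a - of 1)) *ᵥ 1 = (a - Fintype.card n) • 1 := by
  ext ⟨i, k⟩
  simp [mulVec, dotProduct, Fintype.sum_prod_type, one_apply, diagonal_apply]

theorem of_one_mul_invOf_mul_of_one {p K : Type*} [Field K] (D : Matrix n n K) [Invertible D]
    {c : K} (hc : c ≠ 0) (hD : D *ᵥ 1 = c • 1) :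
    (of 1 : Matrix m n K) * ⅟D * (of 1 : Matrix n p K) = of fun _ _ => Fintype.card n / c := by
  have hinv : ⅟D *ᵥ 1 = c⁻¹ • 1 := by
    have h := congrArg (⅟D *ᵥ ·) hD
    simp only [mulVec_mulVec, invOf_mul_self, one_mulVec, mulVec_smul] at h
    exact (eq_inv_smul_iff₀ hc).mpr h.symm
  have hrow := congrFun hinv
  simp only [mulVec, dotProduct, Pi.one_apply, mul_one, Pi.smul_apply, smul_eq_mul] at hrow
  ext i j
  simp only [Matrix.mul_apply, of_apply, Pi.one_apply, one_mul, mul_one]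
  rw [Finset.sum_comm]
  simp only [hrow, Finset.sum_const, Finset.card_univ, nsmul_eq_mul, div_eq_mul_inv]

end Matrix

section Multicone

variable {r s t : ℕ}

@[simp]
theorem multicone_adj_inl_inl {c d : Fin r} :
    (multicone r s t).Adj (.inl c) (.inl d) ↔ c ≠ d := by
  simp [multicone]

@[simp]
theorem multicone_adj_inl_inr (c : Fin r) (p : Fin s × Fin t) :
    (multicone r s t).Adj (.inl c) (.inr p) := by
  simp [multicone]

@[simp]
theorem multicone_adj_inr_inl (p : Fin s × Fin t) (c : Fin r) :
    (multicone r s t).Adj (.inr p) (.inl c) := by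
  simp [multicone]

@[simp]
theorem multicone_adj_inr_inr {i j : Fin s} {a b : Fin t} :
    (multicone r s t).Adj (.inr (i, a)) (.inr (j, b)) ↔ i = j ∧ a ≠ b := by
  refine ⟨fun ⟨hne, hij⟩ => ?_, fun ⟨hij, hab⟩ => ⟨?_, ?_⟩⟩
  · obtain rfl := hij i a j b rfl rfl
    exact ⟨rfl, by simpa using hne⟩
  · simp [hab]
  · rintro _ _ _ _ ⟨⟩ ⟨⟩
    exact hij

theorem scalar_sub_multicone_adjMatrix {R : Type*} [CommRing R] (x : R) :
    scalar _ x - (multicone r s t).adjMatrix R =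
      fromBlocks (scalar _ (x + 1) - of 1) (-of 1) (-of 1) (1 ⊗ₖ (scalar _ (x + 1) - of 1)) := by
  ext (c | ⟨i, a⟩) (d | ⟨j, b⟩) <;> simp [diagonal_apply, one_apply] <;> split_ifs <;> simp_all

theorem det_scalar_sub_multicone_adjMatrix {K : Type*} [Field K] (hr : 1 ≤ r) (ht : 1 ≤ t)
    {x : K} (hx : x + 1 ≠ 0) (hxt : x + 1 - t ≠ 0) :
    (scalar _ x - (multicone r s t).adjMatrix K).det =
      ((x + 1) ^ (t - 1) * (x + 1 - t)) ^ s *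
        ((x + 1) ^ (r - 1) * (x + 1 - r * (1 + s * t / (x + 1 - t)))) := by
  have : Nonempty (Fin r) := ⟨⟨0, hr⟩⟩
  have : Nonempty (Fin t) := ⟨⟨0, ht⟩⟩
  set S : Matrix (Fin s × Fin t) (Fin s × Fin t) K := 1 ⊗ₖ (scalar (Fin t) (x + 1) - of 1)
  have hS : S.det = ((x + 1) ^ (t - 1) * (x + 1 - t)) ^ s := by
    have hblock := det_scalar_sub_of_const (n := Fin t) (x + 1) 1
    rw [mul_one, Fintype.card_fin] at hblock
    rw [det_kronecker, det_one, one_pow, one_mul, Fintype.card_fin]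
    exact congrArg (· ^ s) hblock
  have hS1 : S *ᵥ 1 = (x + 1 - t) • 1 := by
    simpa [S] using one_kronecker_scalar_sub_of_one_mulVec_one (m := Fin s) (n := Fin t) (x + 1)
  have : Invertible S := invertibleOfIsUnitDet S (by rw [hS]; simp [hx, hxt])
  have hschur : scalar (Fin r) (x + 1) - of 1 - of (fun _ _ => (s * t : ℕ) / (x + 1 - t)) =
      scalar (Fin r) (x + 1) - of fun _ _ => 1 + s * t / (x + 1 - t) := by
    ext; simp; ring
  rw [scalar_sub_multicone_adjMatrix, det_fromBlocks₂₂, hS]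
  simp only [Matrix.neg_mul, Matrix.mul_neg, neg_neg]
  rw [of_one_mul_invOf_mul_of_one S hxt hS1, Fintype.card_prod, Fintype.card_fin, Fintype.card_fin,
    hschur, det_scalar_sub_of_const, Fintype.card_fin]

end Multicone

/-- The adjacency characteristic polynomial of the multicone graph `K_r ∇ sK_t` equals
`(x+1)^(r-1+s(t-1)) · (x-(t-1))^(s-1) · (x² - a x + b)` where `a = r+t-2` and
`b = (r-1)(t-1) - rst`. -/
theorem multicone_adj_charpoly (r s t : ℕ) (hr : 1 ≤ r) (hs : 1 ≤ s) (ht : 1 ≤ t) :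
    ((multicone r s t).adjMatrix ℝ).charpoly =
      (X + 1) ^ (r - 1 + s * (t - 1)) * (X - C ((t : ℝ) - 1)) ^ (s - 1) *
        (X ^ 2 - C ((r : ℝ) + (t : ℝ) - 2) * X +
          C (((r : ℝ) - 1) * ((t : ℝ) - 1) - (r : ℝ) * (s : ℝ) * (t : ℝ))) := by
  refine eq_of_infinite_eval_eq _ _ <|
    ((Set.finite_singleton ((t : ℝ) - 1)).insert (-1)).infinite_compl.mono fun x hx => ?_
  simp only [Set.mem_compl_iff, Set.mem_insert_iff, Set.mem_singleton_iff, not_or] at hx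
  have hx₁ : x + 1 ≠ 0 := fun h => hx.1 (by linarith)
  have hxt : x + 1 - t ≠ 0 := fun h => hx.2 (by linarith)
  rw [Set.mem_ofPred_eq, eval_charpoly, det_scalar_sub_multicone_adjMatrix hr ht hx₁ hxt]
  obtain ⟨s, rfl⟩ := Nat.exists_eq_add_one.mpr hs
  simp only [eval_mul, eval_pow, eval_add, eval_sub, eval_X, eval_C, eval_one, Nat.add_sub_cancel,
    Nat.cast_add, Nat.cast_one]
  rw [pow_add (x + 1) (r - 1), pow_mul' (x + 1) (s + 1), mul_pow, pow_succ (x + 1 - t)]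
  field_simp
  ring
end

section
/- Let s be a positive integer. If H is a finite simple graph whose Laplacian matrix has the same characteristic polynomial as that of the friendship graph F_s = K_1 ∇ sK_2 (the graph consisting of s triangles all sharing exactly one common vertex), then H is isomorphic to F_s; that is, every friendship graph is determined by its Laplacian spectrum. -/
open SimpleGraph Polynomial

/-!
Laplacian cospectrality fixes the order `n = 2s + 1` and, through `tr L` and `tr L²`, the degree
sums `∑ d = 6s` and `∑ d² = 4s² + 8s`. The apex of `F_s` makes `n` a Laplacian eigenvalue. Since
`L(H) + L(Hᶜ) = nI - J`, an eigenvector of `L(H)` for `n` is orthogonal to the constants and lies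
in the kernel of `L(Hᶜ)`, so `Hᶜ` is disconnected and `H` is a join.

If `H` had no universal vertex, both sides of the join would have at least two vertices, so every
degree would lie in `[2, 2s]`; but `∑ (d - 2)(2s - d) = 0`, so every degree is `2` or `2s`, and
the degree sum then produces a vertex of degree `2s` after all. For a universal vertex `z`,
`∑_{v ≠ z} (d - 2)² = 0`, so `H - z` is a perfect matching on `2s` vertices. Perfect matchings are
fixed-point-free involutions, all of which are conjugate, and this gives the isomorphism.
-/

open Matrix Finset

namespace Matrix

variable {n : Type*} [Fintype n] [DecidableEq n]

theorem isRoot_charpoly_iff_exists_mulVec_eq_smul {K : Type*} [Field K] {A : Matrix n n K}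
    {μ : K} : A.charpoly.IsRoot μ ↔ ∃ v ≠ 0, A *ᵥ v = μ • v := by
  simp only [IsRoot, eval_charpoly, ← exists_mulVec_eq_zero_iff, sub_mulVec, sub_eq_zero,
    scalar_apply, ← smul_one_eq_diagonal, smul_mulVec, one_mulVec, eq_comm (a := μ • _)]

theorem IsHermitian.trace_mul_self_eq_sum_sq_roots_charpoly {𝕜 : Type*} [RCLike 𝕜]
    {A : Matrix n n 𝕜} (hA : A.IsHermitian) :
    (A * A).trace = (A.charpoly.roots.map (· ^ 2)).sum := by
  conv_lhs => rw [hA.spectral_theorem, ← map_mul, Unitary.conjStarAlgAut_apply, trace_mul_cycle,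
    Unitary.coe_star_mul_self, one_mul]
  simp [hA.roots_charpoly_eq_eigenvalues, trace_diagonal, diagonal_mul_diagonal, sq]

end Matrix

namespace Equiv.Perm

theorem cycleType_eq_replicate_two_of_involutive {α : Type*} [Fintype α] [DecidableEq α]
    {σ : Perm α} (hσ : Function.Involutive σ) (hfix : ∀ x, σ x ≠ x) :
    σ.cycleType = Multiset.replicate (Fintype.card α / 2) 2 := by
  have hsq : σ ^ 2 = 1 := Equiv.ext fun x => hσ x
  have htwo : ∀ k ∈ σ.cycleType, k = 2 := fun k hk =>
    le_antisymm
      (Nat.le_of_dvd two_pos ((dvd_of_mem_cycleType hk).trans (orderOf_dvd_of_pow_eq_one hsq)))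
      (two_le_of_mem_cycleType hk)
  have hsum := σ.sum_cycleType
  rw [show σ.support = univ from eq_univ_of_forall fun x => mem_support.mpr (hfix x), card_univ,
    Multiset.eq_replicate_card.mpr htwo, Multiset.sum_replicate, smul_eq_mul] at hsum
  rw [Multiset.eq_replicate_card.mpr htwo]
  congr
  omega

end Equiv.Perm

theorem exists_equiv_comp_eq_of_involutive {α β : Type*} [Fintype α] [DecidableEq α]
    [Fintype β] [DecidableEq β] {f : α → α} {g : β → β} (hf : Function.Involutive f)
    (hg : Function.Involutive g) (hf' : ∀ x, f x ≠ x) (hg' : ∀ y, g y ≠ y)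
    (h : Fintype.card α = Fintype.card β) : ∃ e : α ≃ β, ∀ x, e (f x) = g (e x) := by
  obtain ⟨e₀⟩ := Fintype.card_eq.mp h
  set σ : Equiv.Perm β := e₀.permCongr hf.toPerm
  have hσ : Function.Involutive σ := fun y => by simp [σ, Equiv.permCongr_apply, hf _]
  have hσ' : ∀ y, σ y ≠ y := fun y hy =>
    hf' (e₀.symm y) (by simpa [σ, Equiv.permCongr_apply] using congrArg e₀.symm hy)
  obtain ⟨c, hc⟩ := isConj_iff.mp <| (Equiv.Perm.isConj_iff_cycleType_eq (σ := σ)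
      (τ := hg.toPerm)).mpr <| by
    rw [Equiv.Perm.cycleType_eq_replicate_two_of_involutive hσ hσ',
      Equiv.Perm.cycleType_eq_replicate_two_of_involutive (σ := hg.toPerm) hg hg']
  refine ⟨e₀.trans c, fun x => ?_⟩
  simpa [σ, Equiv.permCongr_apply] using congrArg (· (c (e₀ x))) hc

namespace SimpleGraph

section Laplacian

variable {V : Type*} [Fintype V] [DecidableEq V] (G : SimpleGraph V) [DecidableRel G.Adj]

theorem trace_lapMatrix (R : Type*) [Ring R] :
    (G.lapMatrix R).trace = ∑ v, (G.degree v : R) := by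
  simp [lapMatrix, degMatrix, trace_sub]

theorem trace_lapMatrix_mul_self (R : Type*) [CommRing R] :
    (G.lapMatrix R * G.lapMatrix R).trace = ∑ v, ((G.degree v : R) ^ 2 + G.degree v) := by
  have hDA : (G.degMatrix R * G.adjMatrix R).trace = 0 := by
    simp only [trace, Matrix.diag, degMatrix, diagonal_mul, adjMatrix_apply, G.irrefl, if_false,
      mul_zero, Finset.sum_const_zero]
  rw [lapMatrix, sub_mul, mul_sub, mul_sub, trace_sub, trace_sub, trace_sub,
    trace_mul_comm (G.adjMatrix R), hDA]
  simp only [trace, Matrix.diag, degMatrix, diagonal_mul_diagonal, diagonal_apply_eq,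
    adjMatrix_mul_self_apply_self, Finset.sum_add_distrib, sq, sub_zero, zero_sub, sub_neg_eq_add]

theorem lapMatrix_add_lapMatrix_compl (R : Type*) [Ring R] :
    G.lapMatrix R + Gᶜ.lapMatrix R = (Fintype.card V : R) • 1 - of fun _ _ => 1 := by
  ext u v
  by_cases huv : u = v
  · subst huv
    have := G.degree_lt_card_verts u
    simp [lapMatrix, degMatrix, degree_compl, Nat.cast_sub, Nat.le_sub_one_of_lt this,
      Nat.one_le_of_lt this]
  · by_cases hadj : G.Adj u v <;> simp [lapMatrix, degMatrix, huv, hadj]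

variable {G}

theorem sum_eq_zero_of_lapMatrix_mulVec_eq_smul {R : Type*} [CommRing R] [NoZeroDivisors R]
    {w : V → R} {μ : R} (hμ : μ ≠ 0) (hw : G.lapMatrix R *ᵥ w = μ • w) : ∑ v, w v = 0 := by
  have h : (fun _ => 1) ⬝ᵥ (G.lapMatrix R *ᵥ w) = 0 := by
    rw [dotProduct_mulVec, ← mulVec_transpose, (G.isSymm_lapMatrix R).eq,
      lapMatrix_mulVec_const_eq_zero, zero_dotProduct]
  simpa [hw, dotProduct, ← Finset.mul_sum, hμ] using h

theorem compl_lapMatrix_mulVec_eq_zero {R : Type*} [Field R] [CharZero R] {w : V → R}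
    (hw : G.lapMatrix R *ᵥ w = (Fintype.card V : R) • w) : Gᶜ.lapMatrix R *ᵥ w = 0 := by
  rcases isEmpty_or_nonempty V with hV | hV
  · exact Subsingleton.elim _ _
  have hsum := sum_eq_zero_of_lapMatrix_mulVec_eq_smul (by simp) hw
  rw [eq_sub_of_add_eq' (G.lapMatrix_add_lapMatrix_compl R), sub_mulVec, sub_mulVec, hw,
    smul_mulVec, one_mulVec]
  ext v
  simp [mulVec, dotProduct, hsum]

theorem not_preconnected_compl_of_isRoot_charpoly
    (h : (G.lapMatrix ℝ).charpoly.IsRoot (Fintype.card V)) : ¬ Gᶜ.Preconnected := by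
  obtain ⟨w, hw0, hw⟩ := isRoot_charpoly_iff_exists_mulVec_eq_smul.mp h
  intro hconn
  have hconst : ∀ u v, w u = w v := fun u v =>
    (lapMatrix_mulVec_eq_zero_iff_forall_reachable Gᶜ).mp (compl_lapMatrix_mulVec_eq_zero hw) u v
      (hconn u v)
  obtain ⟨v, hv⟩ := Function.ne_iff.mp hw0
  have : Nonempty V := ⟨v⟩
  have hsum := sum_eq_zero_of_lapMatrix_mulVec_eq_smul (by simp) hw
  simp only [hconst _ v, sum_const, card_univ, nsmul_eq_mul, mul_eq_zero, Nat.cast_eq_zero,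
    Fintype.card_ne_zero, false_or] at hsum
  exact hv hsum

theorem lapMatrix_mulVec_single_of_isUniversal {R : Type*} [Ring R] {z : V}
    (hz : G.IsUniversal z) :
    G.lapMatrix R *ᵥ Pi.single z 1 = (Fintype.card V : R) • Pi.single z 1 - 1 := by
  ext v
  rw [mulVec_single_one]
  by_cases hv : v = z
  · subst hv
    simp [lapMatrix, degMatrix, (degree_eq_card_sub_one G v).mpr hz,
      Nat.cast_pred (Fintype.card_pos_iff.mpr ⟨v⟩)]
  · simp [lapMatrix, degMatrix, hv, (hz (Ne.symm hv)).symm]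

theorem isRoot_charpoly_lapMatrix_of_isUniversal {R : Type*} [Field R] [Nontrivial V] {z : V}
    (hz : G.IsUniversal z) : (G.lapMatrix R).charpoly.IsRoot (Fintype.card V) := by
  refine isRoot_charpoly_iff_exists_mulVec_eq_smul.mpr
    ⟨(Fintype.card V : R) • Pi.single z 1 - 1, fun h => ?_, ?_⟩
  · obtain ⟨v, hv⟩ := exists_ne z
    simpa [hv] using congrFun h v
  · rw [mulVec_sub, mulVec_smul, lapMatrix_mulVec_single_of_isUniversal hz,
      show (1 : V → R) = fun _ => 1 from rfl, lapMatrix_mulVec_const_eq_zero, sub_zero]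

end Laplacian

section Cospectral

variable {V W : Type*} [Fintype V] [DecidableEq V] [Fintype W] [DecidableEq W]

def LapCospectral (G : SimpleGraph V) (G' : SimpleGraph W) [DecidableRel G.Adj]
    [DecidableRel G'.Adj] : Prop :=
  (G.lapMatrix ℝ).charpoly = (G'.lapMatrix ℝ).charpoly

namespace LapCospectral

variable {G : SimpleGraph V} {G' : SimpleGraph W} [DecidableRel G.Adj] [DecidableRel G'.Adj]

theorem card_eq (h : G.LapCospectral G') : Fintype.card V = Fintype.card W := by
  simpa using congrArg natDegree h

theorem sum_degree_eq (h : G.LapCospectral G') : ∑ v, G.degree v = ∑ w, G'.degree w := by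
  have htr := congrArg (- nextCoeff ·) h
  simp only [← trace_eq_neg_charpoly_nextCoeff, trace_lapMatrix] at htr
  exact_mod_cast htr

theorem sum_degree_sq_eq (h : G.LapCospectral G') :
    ∑ v, G.degree v ^ 2 = ∑ w, G'.degree w ^ 2 := by
  have htr : (G.lapMatrix ℝ * G.lapMatrix ℝ).trace = (G'.lapMatrix ℝ * G'.lapMatrix ℝ).trace := by
    rw [(isHermitian_lapMatrix ℝ G).trace_mul_self_eq_sum_sq_roots_charpoly,
      (isHermitian_lapMatrix ℝ G').trace_mul_self_eq_sum_sq_roots_charpoly,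
      show (G.lapMatrix ℝ).charpoly = _ from h]
  have hdeg : ∑ v, (G.degree v : ℝ) = ∑ w, (G'.degree w : ℝ) := by exact_mod_cast h.sum_degree_eq
  simp only [trace_lapMatrix_mul_self, Finset.sum_add_distrib, hdeg, add_left_inj] at htr
  exact_mod_cast htr

end LapCospectral

end Cospectral

section Degrees

variable {V : Type*} [Fintype V] {G : SimpleGraph V} [DecidableRel G.Adj]

theorem two_le_degree_of_not_preconnected_compl (hc : ¬ Gᶜ.Preconnected)
    (hG : ∀ z, ¬ G.IsUniversal z) (x : V) : 2 ≤ G.degree x := by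
  have hcompl : ∀ {u v}, u ≠ v → ¬ G.Adj u v → Gᶜ.Reachable u v := fun huv h =>
    ((compl_adj G _ _).mpr ⟨huv, h⟩).reachable
  have hadj : ∀ {u v}, ¬ Gᶜ.Reachable u v → G.Adj u v := fun huv => by
    by_contra h
    exact huv (hcompl (fun e => huv (e ▸ Reachable.refl _)) h)
  obtain ⟨o, ho⟩ : ∃ o, ¬ Gᶜ.Reachable x o := by
    by_contra! h
    exact hc fun u v => (h u).symm.trans (h v)
  -- `o` and a non-neighbour `y` of `o` lie outside the `Gᶜ`-component of `x`, so both are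
  -- neighbours of `x`.
  obtain ⟨y, hoy, hy⟩ : ∃ y, o ≠ y ∧ ¬ G.Adj o y := by simpa [IsUniversal] using hG o
  have hxy : ¬ Gᶜ.Reachable x y := fun h => ho (h.trans (hcompl hoy hy).symm)
  rw [← card_neighborFinset_eq_degree]
  exact one_lt_card.mpr ⟨o, by simpa using hadj ho, y, by simpa using hadj hxy, hoy⟩

variable {s : ℕ}

theorem exists_isUniversal_of_two_le_degree (hcard : Fintype.card V = 2 * s + 1)
    (h1 : ∑ v, G.degree v = 6 * s) (h2 : ∑ v, G.degree v ^ 2 = 4 * s ^ 2 + 8 * s)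
    (hmin : ∀ v, 2 ≤ G.degree v) : ∃ z, G.IsUniversal z := by
  have hle : ∀ v, G.degree v ≤ 2 * s := fun v => by
    have := G.degree_lt_card_verts v
    omega
  have h1' : ∑ v, (G.degree v : ℤ) = 6 * s := by exact_mod_cast h1
  have h2' : ∑ v, (G.degree v : ℤ) ^ 2 = 4 * s ^ 2 + 8 * s := by exact_mod_cast h2
  have hzero : ∑ v, ((G.degree v : ℤ) - 2) * (2 * s - G.degree v) = 0 := by
    have hexp : ∀ v, ((G.degree v : ℤ) - 2) * (2 * s - G.degree v)
        = (2 * s + 2) * G.degree v - G.degree v ^ 2 - 4 * s := fun v => by ring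
    simp only [hexp, sum_sub_distrib, ← mul_sum, h1', h2', sum_const, card_univ, hcard,
      nsmul_eq_mul]
    push_cast
    ring
  have hterm := (sum_eq_zero_iff_of_nonneg fun v _ =>
    mul_nonneg (sub_nonneg.mpr (by exact_mod_cast hmin v))
      (sub_nonneg.mpr (by exact_mod_cast hle v))).mp hzero
  by_contra! hno
  have htwo : ∀ v, G.degree v = 2 := fun v => by
    have hne : G.degree v ≠ 2 * s := fun h => hno v ((degree_eq_card_sub_one G v).mp (by omega))
    rcases mul_eq_zero.mp (hterm v (mem_univ v)) with h | h <;> omega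
  simp only [htwo, sum_const, card_univ, hcard, smul_eq_mul] at h1
  have : Nonempty V := Fintype.card_pos_iff.mp (by omega)
  exact hno (Classical.arbitrary V) ((degree_eq_card_sub_one G _).mp (by rw [htwo, hcard]; omega))

theorem degree_eq_two_of_isUniversal [DecidableEq V] (hcard : Fintype.card V = 2 * s + 1)
    (h1 : ∑ v, G.degree v = 6 * s) (h2 : ∑ v, G.degree v ^ 2 = 4 * s ^ 2 + 8 * s) {z : V}
    (hz : G.IsUniversal z) {v : V} (hv : v ≠ z) : G.degree v = 2 := by
  have hdz : G.degree z = 2 * s := by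
    rw [(degree_eq_card_sub_one G z).mpr hz, hcard]
    omega
  have h1' : ∑ v, (G.degree v : ℤ) = 6 * s := by exact_mod_cast h1
  have h2' : ∑ v, (G.degree v : ℤ) ^ 2 = 4 * s ^ 2 + 8 * s := by exact_mod_cast h2
  have hzero : ∑ v ∈ univ.erase z, ((G.degree v : ℤ) - 2) ^ 2 = 0 := by
    have hexp : ∀ v, ((G.degree v : ℤ) - 2) ^ 2 = G.degree v ^ 2 - 4 * G.degree v + 4 :=
      fun v => by ring
    simp only [hexp, sum_add_distrib, sum_sub_distrib, ← mul_sum, sum_erase_eq_sub (mem_univ z),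
      h1', h2', hdz, sum_const, card_univ, hcard, nsmul_eq_mul]
    push_cast
    ring
  have := (sum_eq_zero_iff_of_nonneg fun _ _ => sq_nonneg _).mp hzero v (by simpa using hv)
  have : (G.degree v : ℤ) = 2 := by nlinarith
  exact_mod_cast this

end Degrees

section Isomorphism

variable {V W : Type*}

theorem exists_involutive_of_existsUnique_adj {G : SimpleGraph V} (hG : ∀ x, ∃! y, G.Adj x y) :
    ∃ f : V → V, Function.Involutive f ∧ (∀ x, f x ≠ x) ∧ ∀ x y, G.Adj x y ↔ y = f x := by
  choose f hadj huniq using hG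
  have hiff : ∀ x y, G.Adj x y ↔ y = f x := fun x y => ⟨huniq x y, fun h => h ▸ hadj x⟩
  exact ⟨f, fun x => ((hiff _ _).mp (hadj x).symm).symm, fun x => (hadj x).ne', hiff⟩

theorem nonempty_iso_of_existsUnique_adj [Fintype V] [Fintype W] {G : SimpleGraph V}
    {G' : SimpleGraph W} (hG : ∀ x, ∃! y, G.Adj x y) (hG' : ∀ x, ∃! y, G'.Adj x y)
    (h : Fintype.card V = Fintype.card W) : Nonempty (G ≃g G') := by
  classical
  obtain ⟨f, hf, hf', hGf⟩ := exists_involutive_of_existsUnique_adj hG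
  obtain ⟨g, hg, hg', hGg⟩ := exists_involutive_of_existsUnique_adj hG'
  obtain ⟨e, he⟩ := exists_equiv_comp_eq_of_involutive hf hg hf' hg' h
  exact ⟨⟨e, fun {x y} => by rw [hGf, hGg, ← he, e.apply_eq_iff_eq]⟩⟩

variable [DecidableEq V] [DecidableEq W]

theorem nonempty_iso_of_isUniversal {G : SimpleGraph V} {G' : SimpleGraph W} {z : V} {z' : W}
    (hz : G.IsUniversal z) (hz' : G'.IsUniversal z')
    (e : G.induce {z}ᶜ ≃g G'.induce {z'}ᶜ) : Nonempty (G ≃g G') := by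
  let e' : {v // v ≠ z} ≃ {w // w ≠ z'} := e.toEquiv
  let φ : V ≃ W :=
    (Equiv.optionSubtypeNe z).symm.trans (e'.optionCongr.trans (Equiv.optionSubtypeNe z'))
  have hφz : φ z = z' := by simp [φ]
  have hφ : ∀ x (hx : x ≠ z), φ x = e' ⟨x, hx⟩ := fun x hx => by
    simp [φ, Equiv.optionSubtypeNe_symm_of_ne hx]
  refine ⟨⟨φ, fun {x y} => ?_⟩⟩
  by_cases hx : x = z <;> by_cases hy : y = z
  · simp [hx, hy]
  · subst hx
    rw [hφz, hφ y hy]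
    exact iff_of_true (hz' (e' ⟨y, hy⟩).2.symm) (hz (Ne.symm hy))
  · subst hy
    rw [hφz, hφ x hx]
    exact iff_of_true (hz' (e' ⟨x, hx⟩).2.symm).symm (hz (Ne.symm hx)).symm
  · rw [hφ x hx, hφ y hy]
    exact e.map_adj_iff

theorem existsUnique_adj_induce_of_degree_eq_two [Fintype V] {G : SimpleGraph V}
    [DecidableRel G.Adj] {z : V} (hz : G.IsUniversal z) (h2 : ∀ v ≠ z, G.degree v = 2)
    (x : ↥({z}ᶜ : Set V)) : ∃! y, (G.induce {z}ᶜ).Adj x y := by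
  obtain ⟨x, hx : x ≠ z⟩ := x
  have hzx : z ∈ G.neighborFinset x := by simpa using (hz (Ne.symm hx)).symm
  obtain ⟨y, hy⟩ := card_eq_one.mp <| by
    rw [card_erase_of_mem hzx, card_neighborFinset_eq_degree, h2 x hx]
  have hmem : ∀ w, w ≠ z ∧ G.Adj x w ↔ w = y := fun w => by
    simpa [and_comm] using Finset.ext_iff.mp hy w
  exact ⟨⟨y, ((hmem y).mpr rfl).1⟩, ((hmem y).mpr rfl).2,
    fun w hw => Subtype.ext ((hmem w).mp ⟨w.2, hw⟩)⟩

theorem nonempty_iso_of_isUniversal_of_degree_eq_two [Fintype V] [Fintype W]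
    {G : SimpleGraph V} {G' : SimpleGraph W} [DecidableRel G.Adj] [DecidableRel G'.Adj]
    (h : Fintype.card V = Fintype.card W) {z : V} {z' : W} (hz : G.IsUniversal z)
    (hz' : G'.IsUniversal z') (h2 : ∀ v ≠ z, G.degree v = 2) (h2' : ∀ w ≠ z', G'.degree w = 2) :
    Nonempty (G ≃g G') := by
  obtain ⟨e⟩ := nonempty_iso_of_existsUnique_adj (existsUnique_adj_induce_of_degree_eq_two hz h2)
    (existsUnique_adj_induce_of_degree_eq_two hz' h2') (by simp [Finset.filter_ne', h])
  exact nonempty_iso_of_isUniversal hz hz' e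

end Isomorphism

end SimpleGraph

theorem isUniversal_multicone_inl (r s t : ℕ) (i : Fin r) :
    (multicone r s t).IsUniversal (Sum.inl i) :=
  fun _ hne => ⟨hne, by simp⟩

theorem card_multicone_one_two (s : ℕ) : Fintype.card (Fin 1 ⊕ Fin s × Fin 2) = 2 * s + 1 := by
  simp only [Fintype.card_sum, Fintype.card_unique, Fintype.card_prod, Fintype.card_fin]
  ring

theorem degree_multicone_inl (s : ℕ) (i : Fin 1) :
    (multicone 1 s 2).degree (Sum.inl i) = 2 * s := by
  rw [(degree_eq_card_sub_one _ _).mpr (isUniversal_multicone_inl 1 s 2 i),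
    card_multicone_one_two]
  omega

theorem degree_multicone_inr (s : ℕ) (p : Fin s × Fin 2) :
    (multicone 1 s 2).degree (Sum.inr p) = 2 := by
  obtain ⟨i, a⟩ := p
  have : (multicone 1 s 2).neighborFinset (Sum.inr (i, a)) = {Sum.inl 0, Sum.inr (i, a.rev)} := by
    ext (c | ⟨j, b⟩) <;> rw [mem_neighborFinset]
    · simp [multicone, Fin.fin_one_eq_zero c]
    · fin_cases a <;> fin_cases b <;> simp [multicone, eq_comm]
  rw [← card_neighborFinset_eq_degree, this, card_pair (by simp)]

theorem degree_multicone_of_ne_inl (s : ℕ) {w : Fin 1 ⊕ Fin s × Fin 2} (hw : w ≠ Sum.inl 0) :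
    (multicone 1 s 2).degree w = 2 := by
  rcases w with c | p
  · exact absurd (congrArg Sum.inl (Fin.fin_one_eq_zero c)) hw
  · exact degree_multicone_inr s p

theorem sum_degree_multicone (s : ℕ) : ∑ v, (multicone 1 s 2).degree v = 6 * s := by
  simp only [Fintype.sum_sum_type, degree_multicone_inl, degree_multicone_inr,
    sum_const, card_univ, Fintype.card_prod, Fintype.card_fin, smul_eq_mul]
  ring

theorem sum_degree_sq_multicone (s : ℕ) :
    ∑ v, (multicone 1 s 2).degree v ^ 2 = 4 * s ^ 2 + 8 * s := by
  simp only [Fintype.sum_sum_type, degree_multicone_inl, degree_multicone_inr,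
    sum_const, card_univ, Fintype.card_prod, Fintype.card_fin, smul_eq_mul]
  ring

/-- The friendship graph `F_s = K_1 ∇ sK_2` is determined by its Laplacian spectrum:
any graph L-cospectral with `F_s` is isomorphic to it. -/
theorem lap_cospectral_friendship_iso {V : Type} [Fintype V] [DecidableEq V]
    (s : ℕ) (hs : 1 ≤ s)
    (H : SimpleGraph V) [DecidableRel H.Adj]
    (hspec : (H.lapMatrix ℝ).charpoly = ((multicone 1 s 2).lapMatrix ℝ).charpoly) :
    Nonempty (H ≃g multicone 1 s 2) := by
  have hL : H.LapCospectral (multicone 1 s 2) := hspec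
  have hcard : Fintype.card V = 2 * s + 1 := hL.card_eq.trans (card_multicone_one_two s)
  have h1 : ∑ v, H.degree v = 6 * s := hL.sum_degree_eq.trans (sum_degree_multicone s)
  have h2 : ∑ v, H.degree v ^ 2 = 4 * s ^ 2 + 8 * s :=
    hL.sum_degree_sq_eq.trans (sum_degree_sq_multicone s)
  have hapex := isUniversal_multicone_inl 1 s 2 0
  have hc : ¬ Hᶜ.Preconnected := by
    have : Nontrivial (Fin 1 ⊕ Fin s × Fin 2) := ⟨⟨Sum.inl 0, Sum.inr (⟨0, hs⟩, 0), by simp⟩⟩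
    apply not_preconnected_compl_of_isRoot_charpoly
    rw [hspec, hL.card_eq]
    exact isRoot_charpoly_lapMatrix_of_isUniversal hapex
  obtain ⟨z, hz⟩ : ∃ z, H.IsUniversal z := by
    by_contra! hno
    obtain ⟨z, hz⟩ := exists_isUniversal_of_two_le_degree hcard h1 h2
      (two_le_degree_of_not_preconnected_compl hc hno)
    exact hno z hz
  exact nonempty_iso_of_isUniversal_of_degree_eq_two hL.card_eq hz hapex
    (fun _ => degree_eq_two_of_isUniversal hcard h1 h2 hz) (fun _ => degree_multicone_of_ne_inl s)
end
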